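/- Let α ∈ (0,1] and μ, ν, c ∈ ℝ with c not a nonpositive integer. For x, t > 0 with |x^α| < 1, |t^α| < 1, and |x^α + t^α| < 1, Σ_{m=0}^∞ ((μ)_m (ν)_m / (c)_m) ₂F₁(μ+m, ν+m; c+m; x^α) · t^{αm}/m! = ₂F₁(μ, ν; c; x^α + t^α). -/

import Mathlib

/-!
Write `a N` for the coefficients of `F21 μ ν c` and `Z = x ^ α`, `T = t ^ α`, both positive.
The double series `∑ a (m + n) * (m + n).choose m * Z ^ n * T ^ m` converges absolutely,
since `Z + T < 1`. Summed along antidiagonals it gives `∑ a N * (Z + T) ^ N` by the binomial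
theorem. Summed along rows it gives the left-hand side, because
`(b)_(m+n) = (b)_m (b+m)_n` turns `a (m + n) * (m + n).choose m` into
`a m` times the `n`-th coefficient of `F21 (μ + m) (ν + m) (c + m)`.
-/

open scoped Real BigOperators

noncomputable def poch (b : ℝ) (n : ℕ) : ℝ := (ascPochhammer ℝ n).eval b

noncomputable def F21 (μ ν c z : ℝ) : ℝ :=
  ∑' n : ℕ, poch μ n * poch ν n / (poch c n * (n.factorial : ℝ)) * z ^ n

noncomputable def confD (α : ℝ) (f : ℝ → ℝ) : ℝ → ℝ :=
  fun x => x ^ (1 - α) * deriv f x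

noncomputable def theta (α : ℝ) (f : ℝ → ℝ) : ℝ → ℝ :=
  fun x => (1 / α) * x ^ α * confD α f x

open Finset Filter Topology

lemma poch_zero (b : ℝ) : poch b 0 = 1 := by simp [poch]

lemma poch_succ (b : ℝ) (n : ℕ) : poch b (n + 1) = poch b n * (b + n) := by
  simp [poch, ascPochhammer_succ_right]

lemma poch_add (b : ℝ) (m n : ℕ) : poch b (m + n) = poch b m * poch (b + m) n := by
  induction n with
  | zero => simp [poch_zero]
  | succ k ih =>
    rw [← add_assoc, poch_succ, ih, poch_succ]
    push_cast
    ring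

noncomputable def F21Coeff (μ ν c : ℝ) (n : ℕ) : ℝ :=
  poch μ n * poch ν n / (poch c n * n.factorial)

lemma F21_eq_tsum (μ ν c z : ℝ) : F21 μ ν c z = ∑' n, F21Coeff μ ν c n * z ^ n := rfl

lemma F21Coeff_succ (μ ν c : ℝ) (n : ℕ) :
    F21Coeff μ ν c (n + 1)
      = F21Coeff μ ν c n * ((μ + n) * (ν + n) / ((c + n) * (n + 1))) := by
  simp only [F21Coeff, poch_succ, Nat.factorial_succ]
  push_cast
  simp only [div_eq_mul_inv, mul_inv]
  ring

lemma F21Coeff_add_mul_choose (μ ν c : ℝ) (m n : ℕ) :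
    F21Coeff μ ν c (m + n) * (m + n).choose m
      = F21Coeff μ ν c m * F21Coeff (μ + m) (ν + m) (c + m) n := by
  have hchoose : ((m + n).factorial : ℝ) = (m + n).choose m * m.factorial * n.factorial := by
    rw [Nat.choose_symm_add]
    exact_mod_cast (Nat.add_choose_mul_factorial_mul_factorial m n).symm
  have hC : ((m + n).choose m : ℝ) ≠ 0 := Nat.cast_ne_zero.2 (Nat.choose_pos (by omega)).ne'
  simp only [F21Coeff, poch_add, hchoose]
  field_simp

lemma tendsto_add_div_add_atTop (a b : ℝ) :
    Tendsto (fun n : ℕ => (a + n) / (b + n)) atTop (𝓝 1) := by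
  have hconst : Tendsto (fun n : ℕ => a / (b + n)) atTop (𝓝 0) :=
    tendsto_const_nhds.div_atTop (tendsto_atTop_add_const_left _ b tendsto_natCast_atTop_atTop)
  simpa only [add_div, add_comm b, zero_add] using hconst.add (tendsto_natCast_div_add_atTop b)

lemma tendsto_F21Coeff_ratio (μ ν c : ℝ) :
    Tendsto (fun n : ℕ => (μ + n) * (ν + n) / ((c + n) * (n + 1))) atTop (𝓝 1) := by
  have := (tendsto_add_div_add_atTop μ c).mul (tendsto_add_div_add_atTop ν 1)
  simpa only [mul_one, mul_div_mul_comm, add_comm (1 : ℝ)] using this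

lemma summable_abs_F21Coeff_mul_pow (μ ν c : ℝ) {r : ℝ} (hr0 : 0 ≤ r) (hr1 : r < 1) :
    Summable fun n => |F21Coeff μ ν c n| * r ^ n := by
  have hq : r < (1 + r) / 2 := by linarith
  refine summable_of_ratio_norm_eventually_le (r := (1 + r) / 2) (by linarith) ?_
  have hlim := ((tendsto_F21Coeff_ratio μ ν c).abs.const_mul r).eventually_lt_const
    (by simpa using hq)
  filter_upwards [hlim] with n hn
  rw [Real.norm_of_nonneg (by positivity), Real.norm_of_nonneg (by positivity),
    F21Coeff_succ, abs_mul, pow_succ]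
  calc |F21Coeff μ ν c n| * |(μ + n) * (ν + n) / ((c + n) * (n + 1))| * (r ^ n * r)
      = r * |(μ + n) * (ν + n) / ((c + n) * (n + 1))| * (|F21Coeff μ ν c n| * r ^ n) := by ring
    _ ≤ (1 + r) / 2 * (|F21Coeff μ ν c n| * r ^ n) := by gcongr

theorem hasSum_of_summable_sum_norm_antidiagonal {E : Type*} [NormedAddCommGroup E]
    [CompleteSpace E] {f : ℕ × ℕ → E} {a : E}
    (hf : Summable fun N => ∑ p ∈ antidiagonal N, ‖f p‖)
    (ha : HasSum (fun N => ∑ p ∈ antidiagonal N, f p) a) : HasSum f a := by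
  let e := HasAntidiagonal.sigmaAntidiagonalEquivProd (A := ℕ)
  have hsig : Summable (f ∘ e) := by
    refine Summable.of_norm ((summable_sigma_of_nonneg fun _ => norm_nonneg _).2
      ⟨fun N => Summable.of_finite, ?_⟩)
    simpa [e, tsum_fintype, sum_attach (antidiagonal _) fun p => ‖f p‖] using hf
  rw [← e.hasSum_iff]
  refine ha.sigma_of_hasSum (fun N => ?_) hsig
  simpa [e, sum_attach (antidiagonal N) f] using hasSum_fintype fun p : antidiagonal N => f p

lemma sum_antidiagonal_mul_choose_mul_pow_mul_pow {R : Type*} [CommSemiring R] (a : ℕ → R)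
    (u v : R) (N : ℕ) :
    ∑ p ∈ antidiagonal N, a (p.1 + p.2) * (p.1 + p.2).choose p.1 * u ^ p.2 * v ^ p.1
      = a N * (u + v) ^ N := by
  rw [add_comm u, (Commute.all v u).add_pow', mul_sum]
  refine sum_congr rfl fun p hp => ?_
  rw [mem_antidiagonal.1 hp, nsmul_eq_mul]
  ring

theorem hasSum_tsum_choose_mul_pow_of_summable_abs {a : ℕ → ℝ} {z t : ℝ}
    (ha : Summable fun N => |a N| * (|z| + |t|) ^ N) :
    HasSum (fun m => (∑' n, a (m + n) * (m + n).choose m * z ^ n) * t ^ m)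
      (∑' N, a N * (z + t) ^ N) := by
  set f : ℕ × ℕ → ℝ := fun p => a (p.1 + p.2) * (p.1 + p.2).choose p.1 * z ^ p.2 * t ^ p.1
  have hf : HasSum f (∑' N, a N * (z + t) ^ N) := by
    refine hasSum_of_summable_sum_norm_antidiagonal ?_ ?_
    · convert ha using 2 with N
      simp only [f, Real.norm_eq_abs, abs_mul, abs_pow, Nat.abs_cast]
      exact sum_antidiagonal_mul_choose_mul_pow_mul_pow (fun n => |a n|) |z| |t| N
    · rw [funext (sum_antidiagonal_mul_choose_mul_pow_mul_pow a z t)]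
      refine (Summable.of_norm_bounded ha fun N => ?_).hasSum
      rw [Real.norm_eq_abs, abs_mul, abs_pow]
      gcongr
      exact abs_add_le z t
  refine hf.prod_fiberwise fun m => ?_
  rw [← tsum_mul_right]
  exact (hf.summable.prod_factor m).hasSum

theorem stmt7_general (α : ℝ) (μ ν c : ℝ) (x t : ℝ) (hx : 0 < x) (ht : 0 < t)
    (hxt : |x ^ α + t ^ α| < 1) :
    HasSum (fun m : ℕ => poch μ m * poch ν m / poch c m
        * F21 (μ + m) (ν + m) (c + m) (x ^ α) * t ^ (α * m) / (m.factorial : ℝ))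
      (F21 μ ν c (x ^ α + t ^ α)) := by
  have hx' : 0 < x ^ α := Real.rpow_pos_of_pos hx α
  have ht' : 0 < t ^ α := Real.rpow_pos_of_pos ht α
  have hsum := summable_abs_F21Coeff_mul_pow μ ν c (r := |x ^ α| + |t ^ α|) (by positivity)
    (by rwa [abs_of_pos hx', abs_of_pos ht', ← abs_of_pos (add_pos hx' ht')])
  rw [F21_eq_tsum]
  convert hasSum_tsum_choose_mul_pow_of_summable_abs hsum using 1
  funext m
  simp_rw [F21Coeff_add_mul_choose, mul_assoc, tsum_mul_left, ← F21_eq_tsum]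
  rw [Real.rpow_mul ht.le, Real.rpow_natCast, F21Coeff]
  ring

theorem stmt7 (α : ℝ) (hα : α ∈ Set.Ioc (0:ℝ) 1) (μ ν c : ℝ)
    (hc : ∀ k : ℕ, c ≠ -(k : ℝ)) (x t : ℝ) (hx : 0 < x) (ht : 0 < t)
    (hx1 : |x ^ α| < 1) (ht1 : |t ^ α| < 1) (hxt : |x ^ α + t ^ α| < 1) :
    HasSum (fun m : ℕ => poch μ m * poch ν m / poch c m
        * F21 (μ + m) (ν + m) (c + m) (x ^ α) * t ^ (α * m) / (m.factorial : ℝ))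
      (F21 μ ν c (x ^ α + t ^ α)) :=
  stmt7_general α μ ν c x t hx ht hxt
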